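/- arXiv:0709.1176 — 5 statements merged into one kernel-verified Lean document; each statement's English description precedes it below -/
import Mathlib

section
/- Let N ≥ 1 and let a_1, ..., a_L be integers such that for every integer n with n ≢ 0 (mod 2N), the number of indices j ∈ {1, ..., L} with a_j ≡ n (mod 2N) or a_j ≡ −n (mod 2N) is even. Then for every integer b, the product ∏_{j=1}^{L} cos(π b a_j / N) is nonnegative. -/
open Finset

theorem stmt_4 (N L : ℕ) (hN : 1 ≤ N) (a : Fin L → ℤ)
    (hpar : ∀ n : ℤ, ¬ ((2 * N : ℤ) ∣ n) →
      Even ((Finset.univ.filter (fun j : Fin L =>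
        a j ≡ n [ZMOD (2 * N : ℤ)] ∨ a j ≡ -n [ZMOD (2 * N : ℤ)])).card))
    (b : ℤ) :
    0 ≤ ∏ j : Fin L, Real.cos (Real.pi * b * a j / N) := by
  have hN' : (0:ℤ) < N := by exact_mod_cast hN
  set M : ℤ := 2 * (N:ℤ) with hMdef
  have hM0 : 0 < M := by omega
  set K : ℤ → ℤ := fun m => min (m % M) (M - m % M) with hKdef
  have hrng : ∀ m : ℤ, 0 ≤ m % M ∧ m % M < M :=
    fun m => ⟨Int.emod_nonneg m (ne_of_gt hM0), Int.emod_lt_of_pos m hM0⟩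
  have hKrange : ∀ m : ℤ, 0 ≤ K m ∧ 2 * K m ≤ M := by
    intro m
    obtain ⟨h1, h2⟩ := hrng m
    simp only [hKdef]
    omega
  have hKmod : ∀ m m' : ℤ, m % M = m' % M → K m = K m' := by
    intro m m' h; simp [hKdef, h]
  have hKneg : ∀ m : ℤ, K (-m) = K m := by
    intro m
    obtain ⟨h1, h2⟩ := hrng m
    have hneg : (-m) % M = (M - m % M) % M := by
      exact Int.modEq_iff_dvd.mpr ⟨m / M + 1, by linear_combination -(Int.emod_add_mul_ediv m M)⟩
    rcases eq_or_ne (m % M) 0 with h0 | h0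
    · simp [hKdef, hneg, h0, Int.emod_self, le_of_lt hM0]
    · have hlt : (M - m % M) % M = M - m % M :=
        Int.emod_eq_of_lt (by omega) (by omega)
      simp only [hKdef, hneg, hlt]
      omega
  have hNne : (N:ℝ) ≠ 0 := by positivity
  have hcos : ∀ m m' : ℤ, m % M = m' % M →
      Real.cos (Real.pi * b * m / N) = Real.cos (Real.pi * b * m' / N) := by
    intro m m' h
    obtain ⟨t, ht⟩ : M ∣ m - m' := Int.ModEq.dvd (Int.ModEq.symm h)
    have hm : (m:ℝ) = m' + 2 * N * t := by
      have : m = m' + M * t := by omega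
      rw [this]; push_cast [hMdef]; ring
    have heq : (Real.pi * b * m / N : ℝ) =
        Real.pi * b * m' / N + ((b * t : ℤ) : ℝ) * (2 * Real.pi) := by
      rw [hm]; push_cast; field_simp
    rw [heq, Real.cos_add_int_mul_two_pi]
  have hcosneg : ∀ m : ℤ,
      Real.cos (Real.pi * b * (-m : ℤ) / N) = Real.cos (Real.pi * b * m / N) := by
    intro m
    have : (Real.pi * b * ((-m : ℤ) : ℝ) / N) = -(Real.pi * b * m / N) := by
      push_cast; ring
    rw [this, Real.cos_neg]
  have hval : ∀ m : ℤ,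
      Real.cos (Real.pi * b * m / N) = Real.cos (Real.pi * b * (K m) / N) := by
    intro m
    obtain ⟨h1, h2⟩ := hrng m
    rcases min_cases (m % M) (M - m % M) with ⟨he, _⟩ | ⟨he, _⟩
    · have : K m = m % M := he
      rw [this]
      exact hcos m (m % M) (Int.emod_emod_of_dvd m dvd_rfl).symm
    · have hKm : K m = M - m % M := he
      have h3 : Real.cos (Real.pi * b * m / N)
          = Real.cos (Real.pi * b * ((m % M - M : ℤ)) / N) := by
        apply hcos
        rw [Int.sub_emod, Int.emod_self, sub_zero]
        simp [Int.emod_emod_of_dvd m (dvd_refl M)]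
      have h4 : (m % M - M : ℤ) = -(K m) := by omega
      rw [h3, h4, hcosneg]
  have hKK : ∀ m : ℤ, K (K m) = K m := by
    intro m
    obtain ⟨h1, h2⟩ := hKrange m
    have hmod : (K m) % M = K m := Int.emod_eq_of_lt h1 (by omega)
    show min ((K m) % M) (M - (K m) % M) = K m
    rw [hmod]; omega
  rw [← Finset.prod_fiberwise_of_maps_to
      (g := fun j => K (a j)) (t := Finset.image (fun j => K (a j)) Finset.univ)
      (fun j _ => Finset.mem_image_of_mem _ (Finset.mem_univ j))
      (fun j => Real.cos (Real.pi * b * a j / N))]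
  apply Finset.prod_nonneg
  intro y hy
  rw [Finset.prod_eq_pow_card (b := Real.cos (Real.pi * b * y / N))
      (fun j hj => by
        have hjy : K (a j) = y := (Finset.mem_filter.mp hj).2
        rw [hval (a j), hjy])]
  obtain ⟨j0, -, hj0⟩ := Finset.mem_image.mp hy
  have hyrange : 0 ≤ y ∧ 2 * y ≤ M := hj0 ▸ hKrange (a j0)
  by_cases hdvd : M ∣ y
  · have hy0 : y = 0 := by
      have h3 : y % M = 0 := Int.emod_eq_zero_of_dvd hdvd
      have h4 : y % M = y := Int.emod_eq_of_lt hyrange.1 (by omega)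
      omega
    subst hy0
    norm_num
  · have heven := hpar y hdvd
    have hset : Finset.univ.filter (fun j : Fin L => K (a j) = y)
        = Finset.univ.filter (fun j : Fin L =>
            a j ≡ y [ZMOD M] ∨ a j ≡ -y [ZMOD M]) := by
      ext j
      simp only [Finset.mem_filter, Finset.mem_univ, true_and]
      constructor
      · intro h
        obtain ⟨h1, h2⟩ := hrng (a j)
        rcases min_cases ((a j) % M) (M - (a j) % M) with ⟨he, _⟩ | ⟨he, _⟩
        · left
          show (a j) % M = y % M
          have hy' : y % M = y := Int.emod_eq_of_lt hyrange.1 (by omega)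
          have : K (a j) = (a j) % M := he
          omega
        · right
          show (a j) % M = (-y) % M
          have hKy : K (a j) = M - (a j) % M := he
          have hy' : y = M - (a j) % M := by omega
          have : (-y) % M = ((a j) % M - M) % M := by rw [hy']; ring_nf
          rw [this, Int.sub_emod, Int.emod_self, sub_zero]
          simp [Int.emod_emod_of_dvd (a j) (dvd_refl M)]
      · intro h
        have hKy : K y = y := by
          rw [← hj0, hKK]
        rcases h with h | h
        · rw [hKmod (a j) y h, hKy]
        · rw [hKmod (a j) (-y) h, hKneg, hKy]
    rw [hset]
    exact Even.pow_nonneg heven _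
end

section
/- Let N ≥ 1 and let a_1, ..., a_L be integers satisfying: (i) for every integer n ≢ 0 (mod 2N), the number of indices j with a_j ≡ ±n (mod 2N) is even; and (ii) a_1 + ... + a_L ≡ 0 (mod 2N). Then the number of subsets S ⊆ {1, ..., L} with ∑_{i ∈ S} a_i ≡ 0 (mod N) is at least 2^L / N. -/
open Finset

section AuxStmt5

open Complex

private lemma stmt5_cosprod_nonneg (N L : ℕ) (hN : 1 ≤ N) (a : Fin L → ℤ)
    (hpar : ∀ n : ℤ, ¬ ((2 * N : ℤ) ∣ n) →
      Even ((Finset.univ.filter (fun j : Fin L =>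
        a j ≡ n [ZMOD (2 * N : ℤ)] ∨ a j ≡ -n [ZMOD (2 * N : ℤ)])).card))
    (k : ℕ) :
    0 ≤ ∏ j : Fin L, (2 * Real.cos (Real.pi * (k * a j) / N)) := by
  set m : ℤ := 2 * N with hm_def
  have hm : 0 < m := by positivity
  set g : ℤ → ℝ := fun x => 2 * Real.cos (Real.pi * (k * x) / N) with hg_def
  have hN0 : (N : ℝ) ≠ 0 := by positivity
  have gper : ∀ x t : ℤ, g (x + m * t) = g x := by
    intro x t
    have harg : Real.pi * (k * (x + m * t)) / N = Real.pi * (k * x) / N + (k * t) * (2 * Real.pi) := by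
      rw [hm_def]; push_cast; field_simp
    simp only [hg_def]
    push_cast
    rw [harg]
    rw [show ((k : ℝ) * (t:ℤ)) = (((k * t : ℤ) : ℝ)) by push_cast; ring]
    rw [Real.cos_add_int_mul_two_pi]
  have geven : ∀ x : ℤ, g (-x) = g x := by
    intro x
    simp only [hg_def]
    push_cast
    rw [show Real.pi * ((k:ℝ) * (-(x:ℝ))) / N = -(Real.pi * (k * x) / N) by ring, Real.cos_neg]
  have gmod : ∀ x : ℤ, g (x % m) = g x := by
    intro x
    conv_rhs => rw [show x = x % m + m * (x / m) from (Int.emod_add_mul_ediv x m).symm]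
    rw [gper]
  set Φ : ℤ → ℤ := fun x => min (x % m) ((-x) % m) with hΦ_def
  have gΦ : ∀ x : ℤ, g (Φ x) = g x := by
    intro x
    rcases min_cases (x % m) ((-x) % m) with ⟨h, _⟩ | ⟨h, _⟩
    · rw [hΦ_def]; simp only [h, gmod]
    · rw [hΦ_def]; simp only [h, gmod, geven]
  have Φcong : ∀ x y : ℤ, x ≡ y [ZMOD m] → Φ x = Φ y := by
    intro x y h
    have h2 : -x ≡ -y [ZMOD m] := Int.ModEq.neg h
    simp only [hΦ_def, Int.ModEq] at *
    rw [h, h2]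
  have Φneg : ∀ x : ℤ, Φ (-x) = Φ x := by
    intro x
    simp only [hΦ_def, neg_neg, min_comm]
  have Φself : ∀ x : ℤ, (x ≡ Φ x [ZMOD m]) ∨ (x ≡ -(Φ x) [ZMOD m]) := by
    intro x
    rcases min_cases (x % m) ((-x) % m) with ⟨h, _⟩ | ⟨h, _⟩
    · left; simp only [hΦ_def, h]
      exact (Int.emod_emod_of_dvd x dvd_rfl).symm
    · right; simp only [hΦ_def, h]
      have : -x ≡ (-x) % m [ZMOD m] := (Int.emod_emod_of_dvd (-x) dvd_rfl).symm
      have := Int.ModEq.neg this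
      simpa using this
  have Φnonneg : ∀ x : ℤ, 0 ≤ Φ x := fun x =>
    le_min (Int.emod_nonneg x hm.ne') (Int.emod_nonneg (-x) hm.ne')
  have Φlt : ∀ x : ℤ, Φ x < m := fun x =>
    lt_of_le_of_lt (min_le_left _ _) (Int.emod_lt_of_pos x hm)
  have Φfix : ∀ y : ℤ, Φ (Φ y) = Φ y := by
    intro y
    rcases Φself y with h | h
    · exact (Φcong _ _ h).symm
    · have : -y ≡ Φ y [ZMOD m] := by
        have := Int.ModEq.neg h; simpa using this
      calc Φ (Φ y) = Φ (-y) := (Φcong _ _ this).symm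
        _ = Φ y := Φneg y
  calc (0:ℝ) ≤ ∏ t ∈ Finset.univ.image (fun j => Φ (a j)),
        (g t) ^ ((Finset.univ.filter (fun j : Fin L => Φ (a j) = t)).card) := by
        apply Finset.prod_nonneg
        intro t ht
        obtain ⟨j0, _, hj0⟩ := Finset.mem_image.mp ht
        by_cases hdvd : m ∣ t
        · have ht0 : t = 0 := by
            by_contra h0
            have : 0 ≤ t := hj0 ▸ Φnonneg (a j0)
            have h1 : 0 < t := lt_of_le_of_ne this (Ne.symm h0)
            have := Int.le_of_dvd h1 hdvd
            have := hj0 ▸ Φlt (a j0)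
            omega
          subst ht0
          have : g 0 = 2 := by simp [hg_def]
          rw [this]; positivity
        · have hfib : (Finset.univ.filter (fun j : Fin L => Φ (a j) = t)) =
              (Finset.univ.filter (fun j : Fin L =>
                a j ≡ t [ZMOD (2 * N : ℤ)] ∨ a j ≡ -t [ZMOD (2 * N : ℤ)])) := by
            ext j
            simp only [Finset.mem_filter, Finset.mem_univ, true_and]
            constructor
            · intro h
              rcases Φself (a j) with h' | h'
              · left; rwa [h] at h'
              · right; rwa [h] at h'
            · intro h
              have hΦeq : Φ (a j) = Φ t := by
                rcases h with h | h
                · exact Φcong _ _ h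
                · calc Φ (a j) = Φ (-(a j)) := (Φneg _).symm
                    _ = Φ t := Φcong _ _ (by simpa using (Int.ModEq.neg h))
              rw [hΦeq, ← hj0, Φfix]
          rw [hfib]
          exact Even.pow_nonneg (hpar t hdvd) _
    _ = ∏ j : Fin L, g (Φ (a j)) := by
        rw [← Finset.prod_fiberwise_of_maps_to (t := Finset.univ.image (fun j => Φ (a j)))
          (g := fun j => Φ (a j)) (fun j _ => Finset.mem_image_of_mem _ (Finset.mem_univ j))
          (fun j => g (Φ (a j)))]
        apply Finset.prod_congr rfl
        intro t _
        rw [Finset.prod_congr rfl (fun j hj => by rw [(Finset.mem_filter.mp hj).2]),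
          Finset.prod_const]
    _ = ∏ j : Fin L, g (a j) := Finset.prod_congr rfl (fun j _ => gΦ (a j))
    _ = ∏ j : Fin L, (2 * Real.cos (Real.pi * (k * a j) / N)) := rfl

private lemma stmt5_prod_one_add_exp (N L : ℕ) (hN : 1 ≤ N) (a : Fin L → ℤ)
    (hsum : (2 * N : ℤ) ∣ ∑ j : Fin L, a j) (k : ℕ) :
    ∏ j : Fin L, (1 + Complex.exp (2 * Real.pi * Complex.I * (k * a j) / N)) =
      ((∏ j : Fin L, (2 * Real.cos (Real.pi * (k * a j) / N)) : ℝ) : ℂ) := by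
  have hN0 : (N : ℂ) ≠ 0 := by exact_mod_cast Nat.cast_ne_zero.mpr (by omega)
  set θ : Fin L → ℝ := fun j => Real.pi * (k * a j) / N with hθ
  have key : ∀ j, 1 + Complex.exp (2 * Real.pi * Complex.I * (k * a j) / N) =
      Complex.exp (θ j * Complex.I) * (2 * Complex.cos (θ j)) := by
    intro j
    rw [Complex.cos]
    have h1 : Complex.exp ((θ j : ℂ) * I) * ((Complex.exp ((θ j:ℂ) * I) + Complex.exp (-(θ j:ℂ) * I)) / 2 * 2) =
        Complex.exp ((θ j:ℂ) * I) * Complex.exp ((θ j:ℂ) * I) + 1 := by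
      rw [div_mul_cancel₀]
      · rw [mul_add, ← Complex.exp_add, ← Complex.exp_add]
        ring_nf
        rw [Complex.exp_zero]
        ring
      · norm_num
    have h2 : Complex.exp ((θ j:ℂ) * I) * Complex.exp ((θ j:ℂ) * I) =
        Complex.exp (2 * Real.pi * Complex.I * (k * a j) / N) := by
      rw [← Complex.exp_add]
      congr 1
      simp only [hθ]
      push_cast
      field_simp
      ring
    calc 1 + Complex.exp (2 * Real.pi * Complex.I * (k * a j) / N)
        = Complex.exp ((θ j:ℂ) * I) * Complex.exp ((θ j:ℂ) * I) + 1 := by rw [h2]; ring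
      _ = Complex.exp ((θ j:ℂ) * I) * ((Complex.exp ((θ j:ℂ) * I) + Complex.exp (-(θ j:ℂ) * I)) / 2 * 2) := h1.symm
      _ = Complex.exp ((θ j:ℂ) * I) * (2 * ((Complex.exp ((θ j:ℂ) * I) + Complex.exp (-(θ j:ℂ) * I)) / 2)) := by ring
  rw [Finset.prod_congr rfl (fun j _ => key j), Finset.prod_mul_distrib]
  have hexp1 : ∏ j : Fin L, Complex.exp ((θ j : ℂ) * I) = 1 := by
    rw [← Complex.exp_sum]
    obtain ⟨t, ht⟩ := hsum
    have harg : ∑ j : Fin L, ((θ j : ℂ) * I) = (t : ℤ) * (2 * Real.pi * I) * k := by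
      rw [← Finset.sum_mul]
      have : ∑ j : Fin L, ((θ j : ℂ)) = Real.pi * (k * (∑ j : Fin L, a j : ℤ)) / N := by
        push_cast [hθ]
        rw [← Finset.sum_div, ← Finset.mul_sum, ← Finset.mul_sum]
      rw [this, ht]
      push_cast
      field_simp
    rw [harg]
    rw [show ((t:ℂ) * (2 * Real.pi * I) * k) = ((t * k : ℤ) : ℂ) * (2 * Real.pi * I) by push_cast; ring]
    exact Complex.exp_int_mul_two_pi_mul_I _
  rw [hexp1, one_mul]
  push_cast [Complex.ofReal_cos]
  simp only [hθ]
  push_cast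
  ring_nf
  exact Finset.prod_congr rfl (fun x _ => by ring_nf)

private lemma stmt5_geom_inner (N : ℕ) (hN : 1 ≤ N) (s : ℤ) :
    ∑ k ∈ Finset.range N, Complex.exp (2 * Real.pi * Complex.I * (k * s) / N) =
      if (N : ℤ) ∣ s then (N : ℂ) else 0 := by
  have hN0 : (N : ℂ) ≠ 0 := by exact_mod_cast Nat.cast_ne_zero.mpr (by omega)
  have hz : ∀ k : ℕ, Complex.exp (2 * Real.pi * Complex.I * (k * s) / N) =
      (Complex.exp (2 * Real.pi * Complex.I * s / N)) ^ k := by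
    intro k
    rw [← Complex.exp_nat_mul]
    congr 1
    ring
  simp only [hz]
  by_cases hdvd : (N : ℤ) ∣ s
  · rw [if_pos hdvd]
    obtain ⟨c, hc⟩ := hdvd
    have : Complex.exp (2 * Real.pi * Complex.I * s / N) = 1 := by
      rw [hc]
      rw [show (2 * (Real.pi:ℂ) * I * ((N:ℤ) * c : ℤ) / N) = (c : ℂ) * (2 * Real.pi * I) by
        push_cast; field_simp]
      exact Complex.exp_int_mul_two_pi_mul_I c
    simp [this]
  · have hzN : (Complex.exp (2 * Real.pi * Complex.I * s / N)) ^ N = 1 := by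
      rw [← Complex.exp_nat_mul]
      rw [show ((N:ℂ) * (2 * Real.pi * I * s / N)) = (s : ℂ) * (2 * Real.pi * I) by
        field_simp]
      exact Complex.exp_int_mul_two_pi_mul_I s
    have hz1 : Complex.exp (2 * Real.pi * Complex.I * s / N) ≠ 1 := by
      intro h
      rw [Complex.exp_eq_one_iff] at h
      obtain ⟨n, hn⟩ := h
      apply hdvd
      have h2pi : (2 * (Real.pi:ℂ) * I) ≠ 0 := by
        simp [Real.pi_ne_zero, Complex.I_ne_zero]
      have : (s : ℂ) = (n : ℂ) * N := by
        field_simp at hn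
        have hn' : (s:ℂ) * (2 * Real.pi * I) = ((n:ℂ) * N) * (2 * Real.pi * I) := by
          linear_combination (2 * Real.pi * I) * hn
        exact mul_right_cancel₀ h2pi hn'
      have : s = n * N := by exact_mod_cast this
      exact ⟨n, by linarith⟩
    rw [if_neg hdvd, geom_sum_eq hz1, hzN]
    simp

end AuxStmt5

theorem stmt_5 (N L : ℕ) (hN : 1 ≤ N) (a : Fin L → ℤ)
    (hpar : ∀ n : ℤ, ¬ ((2 * N : ℤ) ∣ n) →
      Even ((Finset.univ.filter (fun j : Fin L =>
        a j ≡ n [ZMOD (2 * N : ℤ)] ∨ a j ≡ -n [ZMOD (2 * N : ℤ)])).card))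
    (hsum : (2 * N : ℤ) ∣ ∑ j : Fin L, a j) :
    (2 : ℝ) ^ L / N ≤
      ((Finset.univ.powerset.filter
        (fun S : Finset (Fin L) => (N : ℤ) ∣ ∑ i ∈ S, a i)).card : ℝ) := by
  classical
  set cnt := (Finset.univ.powerset.filter
    (fun S : Finset (Fin L) => (N : ℤ) ∣ ∑ i ∈ S, a i)).card with hcnt
  set R : ℕ → ℝ := fun k => ∏ j : Fin L, (2 * Real.cos (Real.pi * (k * a j) / N)) with hR
  have main : ((N : ℂ)) * cnt = ∑ k ∈ Finset.range N, ((R k : ℝ) : ℂ) := by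
    have lhs : ∑ k ∈ Finset.range N, ∑ S ∈ Finset.univ.powerset,
        Complex.exp (2 * Real.pi * Complex.I * (k * (∑ i ∈ S, a i)) / N) = (N : ℂ) * cnt := by
      rw [Finset.sum_comm]
      rw [Finset.sum_congr rfl (fun S _ => stmt5_geom_inner N hN (∑ i ∈ S, a i))]
      rw [← Finset.sum_filter, Finset.sum_const, hcnt]
      simp [mul_comm]
    have rhs : ∀ k ∈ Finset.range N, ∑ S ∈ Finset.univ.powerset,
        Complex.exp (2 * Real.pi * Complex.I * (k * (∑ i ∈ S, a i)) / N) = ((R k : ℝ) : ℂ) := by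
      intro k _
      rw [← stmt5_prod_one_add_exp N L hN a hsum k]
      have expand : ∏ j : Fin L, (1 + Complex.exp (2 * Real.pi * Complex.I * (k * a j) / N)) =
          ∑ S ∈ Finset.univ.powerset, ∏ i ∈ S, Complex.exp (2 * Real.pi * Complex.I * (k * a i) / N) := by
        rw [Finset.prod_congr rfl (fun j _ => add_comm 1 (Complex.exp (2 * Real.pi * Complex.I * (k * a j) / N)))]
        rw [Finset.prod_add]
        exact Finset.sum_congr rfl (fun S _ => by simp)
      rw [expand]
      apply Finset.sum_congr rfl
      intro S _
      rw [← Complex.exp_sum]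
      congr 1
      push_cast
      rw [← Finset.sum_div, ← Finset.mul_sum, ← Finset.mul_sum]
    rw [← lhs]
    exact Finset.sum_congr rfl rhs
  have mainR : (N : ℝ) * cnt = ∑ k ∈ Finset.range N, R k := by
    have h1 : (((N : ℝ) * cnt : ℝ) : ℂ) = (((∑ k ∈ Finset.range N, R k : ℝ)) : ℂ) := by
      push_cast
      push_cast at main
      convert main using 2
    exact_mod_cast h1
  have h0 : R 0 = 2 ^ L := by
    simp only [hR, Nat.cast_zero, zero_mul, mul_zero, zero_div, Real.cos_zero, mul_one,
      Finset.prod_const, Finset.card_univ, Fintype.card_fin]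
  have hle : (2 : ℝ) ^ L ≤ ∑ k ∈ Finset.range N, R k := by
    rw [← h0]
    exact Finset.single_le_sum (f := R)
      (fun k _ => stmt5_cosprod_nonneg N L hN a hpar k) (Finset.mem_range.mpr (by omega))
  have hNpos : (0 : ℝ) < N := by positivity
  rw [div_le_iff₀ hNpos]
  have hcomm : (N : ℝ) * cnt = (cnt : ℝ) * N := mul_comm _ _
  linarith [mainR, hle]
end

section
/- For every odd integer N ≥ 3 and every sequence a_1, ..., a_M of integers with M ≥ 4N, there exists a subset T ⊆ {1, ..., M} of size L = |T| > N such that the number of subsets S ⊆ T with ∑_{i ∈ S} a_i ≡ 0 (mod N) is at least 2^L / N. -/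
open Finset

/-- Pigeonhole on prefix sums: any finset of size at least `N` has a nonempty
subset whose values sum to `0` in `ZMod N`. -/
private lemma exists_zero_sum_aux {N M : ℕ} (hN : 0 < N) (b : Fin M → ZMod N)
    (P : Finset (Fin M)) (hP : N ≤ P.card) :
    ∃ Q, Q ⊆ P ∧ Q.Nonempty ∧ ∑ i ∈ Q, b i = 0 := by
  haveI : NeZero N := ⟨hN.ne'⟩
  set l := P.sort (· ≤ ·) with hldef
  have hnd : l.Nodup := P.sort_nodup _
  have hlen : l.length = P.card := P.length_sort _
  have key : ∀ i j : ℕ, i < j → j ≤ N →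
      ((l.take i).map b).sum = ((l.take j).map b).sum →
      ∃ Q, Q ⊆ P ∧ Q.Nonempty ∧ ∑ x ∈ Q, b x = 0 := by
    intro i j hij hjN hsum
    have hndi : (l.take i).Nodup := hnd.sublist (List.take_sublist _ _)
    have hndj : (l.take j).Nodup := hnd.sublist (List.take_sublist _ _)
    have hpre : List.Sublist (l.take i) (l.take j) := by
      have h1 : (l.take j).take i = l.take i := by
        rw [List.take_take, min_eq_left hij.le]
      rw [← h1]; exact List.take_sublist _ _
    have hsub : (l.take i).toFinset ⊆ (l.take j).toFinset := by
      intro x hx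
      rw [List.mem_toFinset] at hx ⊢
      exact hpre.subset hx
    refine ⟨(l.take j).toFinset \ (l.take i).toFinset, ?_, ?_, ?_⟩
    · intro x hx
      have h2 := (Finset.mem_sdiff.mp hx).1
      rw [List.mem_toFinset] at h2
      have h3 := (List.take_sublist _ _).subset h2
      have h4 : x ∈ l.toFinset := List.mem_toFinset.mpr h3
      rwa [hldef, Finset.sort_toFinset] at h4
    · rw [← Finset.card_pos, Finset.card_sdiff_of_subset hsub,
        List.toFinset_card_of_nodup hndi, List.toFinset_card_of_nodup hndj,
        List.length_take, List.length_take]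
      omega
    · rw [Finset.sum_sdiff_eq_sub hsub, List.sum_toFinset _ hndj,
        List.sum_toFinset _ hndi, hsum, sub_self]
  obtain ⟨i, hi, j, hj, hij, hgij⟩ :=
    Finset.exists_ne_map_eq_of_card_lt_of_maps_to (s := Finset.range (N + 1))
      (t := (Finset.univ : Finset (ZMod N)))
      (by simp [ZMod.card])
      (fun x _ => Finset.mem_univ (((l.take x).map b).sum))
  rw [Finset.mem_range] at hi hj
  rcases hij.lt_or_gt with h | h
  · exact key i j h (by omega) hgij
  · exact key j i h (by omega) hgij.symm

/-- Greedy extraction: from any finset one can extract a zero-sum subset that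
misses at most `N - 1` elements. -/
private lemma exists_big_zero_sum {N M : ℕ} (hN : 0 < N) (b : Fin M → ZMod N)
    (P : Finset (Fin M)) :
    ∃ W, W ⊆ P ∧ (∑ i ∈ W, b i) = 0 ∧ P.card + 1 ≤ W.card + N := by
  induction P using Finset.strongInduction with
  | _ P ih =>
    by_cases h : N ≤ P.card
    · obtain ⟨Q, hQP, hQne, hQ0⟩ := exists_zero_sum_aux hN b P h
      obtain ⟨W, hWsub, hW0, hWcard⟩ := ih (P \ Q) (Finset.sdiff_ssubset hQP hQne)
      have hdisj : Disjoint W Q :=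
        Finset.disjoint_of_subset_left hWsub (Finset.sdiff_disjoint)
      refine ⟨W ∪ Q, Finset.union_subset (hWsub.trans (Finset.sdiff_subset)) hQP, ?_, ?_⟩
      · rw [Finset.sum_union hdisj, hW0, hQ0, add_zero]
      · have h1 : (P \ Q).card = P.card - Q.card := Finset.card_sdiff_of_subset hQP
        have h2 : Q.card ≤ P.card := Finset.card_le_card hQP
        have h3 : 0 < Q.card := Finset.card_pos.mpr hQne
        rw [Finset.card_union_of_disjoint hdisj]
        omega
    · exact ⟨∅, Finset.empty_subset _, Finset.sum_empty, by simp; omega⟩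

/-- Twin pairing: extract `k` disjoint pairs with equal residues mod `N`. -/
private lemma exists_pairs {N M : ℕ} (hN : 0 < N) (a : Fin M → ℤ) :
    ∀ k : ℕ, N + 2 * k ≤ M + 1 →
    ∃ (U : Finset (Fin M)) (f : Fin M → Fin M),
      U.card = k ∧ Set.InjOn f U ∧ Disjoint U (U.image f) ∧
      ∀ i ∈ U, ((a (f i) : ZMod N)) = (a i : ZMod N) := by
  haveI : NeZero N := ⟨hN.ne'⟩
  intro k
  induction k with
  | zero => exact fun _ => ⟨∅, id, by simp, by simp, by simp, by simp⟩
  | succ k ih =>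
    intro hk
    obtain ⟨U, f, hcard, hinj, hdisj, hres⟩ := ih (by omega)
    set V := U.image f with hVdef
    have hVcard : V.card ≤ k := le_trans (Finset.card_image_le) (le_of_eq hcard)
    have hUV : (U ∪ V).card ≤ 2 * k := le_trans (Finset.card_union_le _ _) (by omega)
    set X := (Finset.univ : Finset (Fin M)) \ (U ∪ V) with hXdef
    have hXcard : N < X.card := by
      have h1 : X.card = M - (U ∪ V).card := by
        rw [hXdef, Finset.card_sdiff_of_subset (Finset.subset_univ _), Finset.card_univ,
          Fintype.card_fin]
      omega
    obtain ⟨x, hx, y, hy, hxy, hxyr⟩ :=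
      Finset.exists_ne_map_eq_of_card_lt_of_maps_to (s := X)
        (t := (Finset.univ : Finset (ZMod N)))
        (by simpa [ZMod.card] using hXcard)
        (fun i _ => Finset.mem_univ ((a i : ZMod N)))
    rw [hXdef, Finset.mem_sdiff, Finset.mem_union] at hx hy
    push_neg at hx hy
    have hxU : x ∉ U := hx.2.1
    have hxV : x ∉ V := hx.2.2
    have hyU : y ∉ U := hy.2.1
    have hyV : y ∉ V := hy.2.2
    set g := Function.update f x y with hgdef
    have hgx : g x = y := Function.update_self _ _ _
    have hgU : ∀ i ∈ U, g i = f i := by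
      intro i hi
      exact Function.update_of_ne (fun h => hxU (by rw [← h]; exact hi)) _ _
    have himg : (insert x U).image g = insert y V := by
      rw [Finset.image_insert]
      rw [hgx, hVdef]
      congr 1
      exact Finset.image_congr (fun i hi => hgU i hi)
    refine ⟨insert x U, g, ?_, ?_, ?_, ?_⟩
    · rw [Finset.card_insert_of_notMem hxU, hcard]
    · intro i hi j hj hij
      rw [Finset.coe_insert, Set.mem_insert_iff] at hi hj
      rcases hi with rfl | hi <;> rcases hj with rfl | hj
      · rfl
      · exfalso
        apply hyV
        have hyj : y = f j := by rw [← hgx, hij, hgU j hj]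
        rw [hyj]
        exact Finset.mem_image_of_mem f hj
      · exfalso
        apply hyV
        have hyi : y = f i := by rw [← hgx, ← hij, hgU i hi]
        rw [hyi]
        exact Finset.mem_image_of_mem f hi
      · rw [hgU i hi, hgU j hj] at hij
        exact hinj hi hj hij
    · rw [himg]
      rw [Finset.disjoint_left]
      intro i hi hi'
      rw [Finset.mem_insert] at hi hi'
      rcases hi with rfl | hi
      · rcases hi' with rfl | hi'
        · exact hxy rfl
        · exact hxV hi'
      · rcases hi' with rfl | hi'
        · exact hyU hi
        · exact (Finset.disjoint_left.mp hdisj hi) hi'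
    · intro i hi
      rw [Finset.mem_insert] at hi
      rcases hi with rfl | hi
      · rw [hgx]
        exact hxyr.symm
      · rw [hgU i hi]
        exact hres i hi

theorem stmt_6 (N M : ℕ) (hN : 3 ≤ N) (hodd : Odd N) (hM : 4 * N ≤ M)
    (a : Fin M → ℤ) :
    ∃ T : Finset (Fin M), N < T.card ∧
      (2 : ℝ) ^ T.card / N ≤
        ((T.powerset.filter
          (fun S : Finset (Fin M) => (N : ℤ) ∣ ∑ i ∈ S, a i)).card : ℝ) := by
  classical
  haveI : NeZero N := ⟨by omega⟩
  have hN0 : 0 < N := by omega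
  obtain ⟨m, hm⟩ := hodd
  obtain ⟨U, f, hUcard, hinj, hdisjU, hres⟩ :=
    exists_pairs hN0 a (3 * m + 2) (by omega)
  obtain ⟨W, hWU, hW0, hWcard⟩ :=
    exists_big_zero_sum hN0 (fun i => (a i : ZMod N)) U
  have hWc : m + 2 ≤ W.card := by rw [hUcard] at hWcard; omega
  set V := W.image f with hVdef
  have hinjW : Set.InjOn f W := hinj.mono (Finset.coe_subset.mpr hWU)
  have hdisj : Disjoint W V := by
    apply Finset.disjoint_of_subset_left hWU
    exact Finset.disjoint_of_subset_right (Finset.image_subset_image hWU) hdisjU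
  have hVcard : V.card = W.card := Finset.card_image_of_injOn hinjW
  set T := W ∪ V with hTdef
  have hTcard : T.card = W.card * 2 := by
    rw [hTdef, Finset.card_union_of_disjoint hdisj, hVcard]; ring
  refine ⟨T, by omega, ?_⟩
  -- the residue sum function
  set σ : Finset (Fin M) → ZMod N := fun A => ∑ i ∈ A, (a i : ZMod N) with hσdef
  have himgsum : ∀ A : Finset (Fin M), A ⊆ W → σ (A.image f) = σ A := by
    intro A hA
    rw [hσdef]
    simp only
    rw [Finset.sum_image (fun x hx y hy h => hinjW (hA hx) (hA hy) h)]
    exact Finset.sum_congr rfl (fun i hi => hres i (hWU (hA hi)))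
  have hσV : σ V = 0 := by
    rw [hVdef, himgsum W (Finset.Subset.refl W)]
    exact hW0
  have hdv : ∀ S : Finset (Fin M), ((N : ℤ) ∣ ∑ i ∈ S, a i) ↔ σ S = 0 := by
    intro S
    have hcast : ((∑ i ∈ S, a i : ℤ) : ZMod N) = σ S := by
      rw [hσdef]; push_cast; rfl
    rw [← ZMod.intCast_zmod_eq_zero_iff_dvd, hcast]
  set F : ZMod N → ℕ := fun s => (W.powerset.filter (fun A => σ A = s)).card with hFdef
  set G : ZMod N → ℕ := fun s => (V.powerset.filter (fun B => σ B = s)).card with hGdef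
  have himg_sub : ∀ A1 A2 : Finset (Fin M), A1 ⊆ W → A2 ⊆ W →
      A1.image f = A2.image f → A1 ⊆ A2 := by
    intro A1 A2 h1 h2 he i hi
    have hfi : f i ∈ A2.image f := by rw [← he]; exact Finset.mem_image_of_mem f hi
    obtain ⟨j, hj, hji⟩ := Finset.mem_image.mp hfi
    have := hinjW (h2 hj) (h1 hi) hji
    rwa [← this]
  have hGF : ∀ s, G s = F s := by
    intro s
    rw [hGdef, hFdef]
    simp only
    symm
    apply Finset.card_bij (fun A _ => A.image f)
    · intro A hA
      rw [Finset.mem_filter, Finset.mem_powerset] at hA ⊢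
      constructor
      · rw [hVdef]; exact Finset.image_subset_image hA.1
      · rw [himgsum A hA.1]; exact hA.2
    · intro A1 h1 A2 h2 h
      rw [Finset.mem_filter, Finset.mem_powerset] at h1 h2
      exact Finset.Subset.antisymm (himg_sub A1 A2 h1.1 h2.1 h)
        (himg_sub A2 A1 h2.1 h1.1 h.symm)
    · intro B hB
      rw [Finset.mem_filter, Finset.mem_powerset] at hB
      have hAW : W.filter (fun i => f i ∈ B) ⊆ W := Finset.filter_subset _ _
      have himg : (W.filter (fun i => f i ∈ B)).image f = B := by
        apply Finset.Subset.antisymm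
        · intro b hb
          obtain ⟨i, hi, rfl⟩ := Finset.mem_image.mp hb
          exact (Finset.mem_filter.mp hi).2
        · intro b hb
          have hbV : b ∈ V := hB.1 hb
          rw [hVdef] at hbV
          obtain ⟨i, hiW, rfl⟩ := Finset.mem_image.mp hbV
          exact Finset.mem_image_of_mem f (Finset.mem_filter.mpr ⟨hiW, hb⟩)
      refine ⟨W.filter (fun i => f i ∈ B), ?_, himg⟩
      rw [Finset.mem_filter, Finset.mem_powerset]
      refine ⟨hAW, ?_⟩
      rw [← himgsum _ hAW, himg]
      exact hB.2
  have hcompl : ∀ B : Finset (Fin M), B ⊆ V → σ (V \ B) = - σ B := by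
    intro B hB
    rw [hσdef]
    simp only
    rw [Finset.sum_sdiff_eq_sub hB]
    have hv : ∑ i ∈ V, (a i : ZMod N) = 0 := hσV
    rw [hv, zero_sub]
  have hGsym : ∀ s : ZMod N, G (-s) = G s := by
    intro s
    rw [hGdef]
    simp only
    apply Finset.card_bij' (fun B _ => V \ B) (fun B _ => V \ B)
    · intro B hB
      rw [Finset.mem_filter, Finset.mem_powerset] at hB ⊢
      refine ⟨Finset.sdiff_subset, ?_⟩
      rw [hcompl B hB.1, hB.2, neg_neg]
    · intro B hB
      rw [Finset.mem_filter, Finset.mem_powerset] at hB ⊢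
      refine ⟨Finset.sdiff_subset, ?_⟩
      rw [hcompl B hB.1, hB.2]
    · intro B hB
      rw [Finset.mem_filter, Finset.mem_powerset] at hB
      exact Finset.sdiff_sdiff_eq_self hB.1
    · intro B hB
      rw [Finset.mem_filter, Finset.mem_powerset] at hB
      exact Finset.sdiff_sdiff_eq_self hB.1
  have hFsum : ∑ s : ZMod N, F s = 2 ^ W.card := by
    rw [hFdef]
    simp only
    rw [← Finset.card_eq_sum_card_fiberwise
      (f := σ) (s := W.powerset) (t := (Finset.univ : Finset (ZMod N)))
      (fun A _ => Finset.mem_univ _)]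
    exact Finset.card_powerset W
  have hcount : (T.powerset.filter
      (fun S : Finset (Fin M) => (N : ℤ) ∣ ∑ i ∈ S, a i)).card
      = ∑ s : ZMod N, F s * F s := by
    have hsplit : ∀ S : Finset (Fin M), S ⊆ T → (S ∩ W) ∪ (S ∩ V) = S := by
      intro S hS
      rw [← Finset.inter_union_distrib_left, ← hTdef]
      exact Finset.inter_eq_left.mpr hS
    have hsum_split : ∀ S : Finset (Fin M), S ⊆ T → σ (S ∩ W) + σ (S ∩ V) = σ S := by
      intro S hS
      conv_rhs => rw [← hsplit S hS]
      rw [hσdef]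
      simp only
      rw [Finset.sum_union (hdisj.mono Finset.inter_subset_right Finset.inter_subset_right)]
    have step1 : (T.powerset.filter
        (fun S : Finset (Fin M) => (N : ℤ) ∣ ∑ i ∈ S, a i)).card
        = ((W.powerset ×ˢ V.powerset).filter (fun p => σ p.1 + σ p.2 = 0)).card := by
      apply Finset.card_bij' (fun S _ => (S ∩ W, S ∩ V)) (fun p _ => p.1 ∪ p.2)
      · intro S hS
        rw [Finset.mem_filter, Finset.mem_powerset] at hS
        rw [Finset.mem_filter, Finset.mem_product]
        refine ⟨⟨?_, ?_⟩, ?_⟩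
        · exact Finset.mem_powerset.mpr Finset.inter_subset_right
        · exact Finset.mem_powerset.mpr Finset.inter_subset_right
        · rw [hsum_split S hS.1]
          exact (hdv S).mp hS.2
      · intro p hp
        rw [Finset.mem_filter, Finset.mem_product, Finset.mem_powerset,
          Finset.mem_powerset] at hp
        rw [Finset.mem_filter, Finset.mem_powerset]
        constructor
        · rw [hTdef]
          exact Finset.union_subset_union hp.1.1 hp.1.2
        · rw [hdv]
          rw [hσdef]
          simp only
          rw [Finset.sum_union (hdisj.mono hp.1.1 hp.1.2)]
          exact hp.2
      · intro S hS
        rw [Finset.mem_filter, Finset.mem_powerset] at hS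
        exact hsplit S hS.1
      · intro p hp
        rw [Finset.mem_filter, Finset.mem_product, Finset.mem_powerset,
          Finset.mem_powerset] at hp
        have hBW : p.2 ∩ W = ∅ :=
          Finset.disjoint_iff_inter_eq_empty.mp (hdisj.symm.mono_left hp.1.2)
        have hAV : p.1 ∩ V = ∅ :=
          Finset.disjoint_iff_inter_eq_empty.mp (hdisj.mono_left hp.1.1)
        have h1 : (p.1 ∪ p.2) ∩ W = p.1 := by
          rw [Finset.union_inter_distrib_right, Finset.inter_eq_left.mpr hp.1.1,
            hBW, Finset.union_empty]
        have h2 : (p.1 ∪ p.2) ∩ V = p.2 := by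
          rw [Finset.union_inter_distrib_right, Finset.inter_eq_left.mpr hp.1.2,
            hAV, Finset.empty_union]
        rw [Prod.ext_iff]
        exact ⟨h1, h2⟩
    rw [step1]
    have step2 : ((W.powerset ×ˢ V.powerset).filter (fun p => σ p.1 + σ p.2 = 0)).card
        = ∑ A ∈ W.powerset, G (- σ A) := by
      rw [Finset.card_filter, Finset.sum_product]
      apply Finset.sum_congr rfl
      intro A _
      rw [hGdef]
      simp only
      rw [Finset.card_filter]
      apply Finset.sum_congr rfl
      intro B _
      have hiff : (σ A + σ B = 0) ↔ (σ B = - σ A) := by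
        constructor
        · intro h
          exact eq_neg_of_add_eq_zero_right h
        · intro h
          rw [h]
          ring
      rw [if_congr hiff rfl rfl]
    rw [step2]
    have step3 : ∑ A ∈ W.powerset, G (- σ A) = ∑ A ∈ W.powerset, F (σ A) := by
      apply Finset.sum_congr rfl
      intro A _
      rw [hGsym, hGF]
    rw [step3]
    rw [← Finset.sum_fiberwise_of_maps_to
      (g := σ) (t := (Finset.univ : Finset (ZMod N)))
      (fun A _ => Finset.mem_univ _) (fun A => F (σ A))]
    apply Finset.sum_congr rfl
    intro s _
    have : ∑ A ∈ W.powerset.filter (fun A => σ A = s), F (σ A)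
        = ∑ A ∈ W.powerset.filter (fun A => σ A = s), F s := by
      apply Finset.sum_congr rfl
      intro A hA
      rw [(Finset.mem_filter.mp hA).2]
    rw [this, Finset.sum_const, smul_eq_mul]
  -- Cauchy-Schwarz conclusion
  rw [hcount]
  have hNR : (0 : ℝ) < N := by exact_mod_cast hN0
  rw [div_le_iff₀ hNR]
  have hcs := sq_sum_le_card_mul_sum_sq
    (s := (Finset.univ : Finset (ZMod N))) (f := fun s => (F s : ℝ))
  rw [Finset.card_univ, ZMod.card] at hcs
  have h1 : ∑ s : ZMod N, (F s : ℝ) = (2 : ℝ) ^ W.card := by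
    rw [← Nat.cast_sum, hFsum]
    push_cast
    ring
  have h2 : ∑ s : ZMod N, (F s : ℝ) ^ 2 = ((∑ s : ZMod N, F s * F s : ℕ) : ℝ) := by
    rw [Nat.cast_sum]
    apply Finset.sum_congr rfl
    intro s _
    push_cast
    ring
  rw [h1, h2] at hcs
  calc (2 : ℝ) ^ T.card = ((2 : ℝ) ^ W.card) ^ 2 := by
        rw [hTcard, pow_mul]
    _ ≤ N * ((∑ s : ZMod N, F s * F s : ℕ) : ℝ) := hcs
    _ = ((∑ s : ZMod N, F s * F s : ℕ) : ℝ) * N := by ring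
end

section
/- Let N ≥ 2 and let a_1, ..., a_M be integers with M ≥ 4N. Then there exists a subset T ⊆ {1, ..., M} with |T| > N, an even number 2k = |T| of elements, such that T is a disjoint union of pairs {i, j} with a_i ≡ ±a_j (mod 2N), and ∑_{i ∈ T} a_i ≡ 0 (mod 2N). -/
open Finset


lemma dav {ι : Type*} [DecidableEq ι] (N : ℕ) (hN : 0 < N) (b : ι → ℤ)
    (F : Finset ι) (hF : N ≤ F.card) :
    ∃ S ⊆ F, S.Nonempty ∧ (N : ℤ) ∣ ∑ i ∈ S, b i := by
  haveI : NeZero N := ⟨hN.ne'⟩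
  set n := F.card with hn
  let T : ℕ → Finset ι := fun k =>
    (F.attach.filter (fun x => ((F.equivFin x : Fin n) : ℕ) < k)).image Subtype.val
  have hTsub : ∀ k, T k ⊆ F := by
    intro k x hx
    simp only [T, mem_image, mem_filter] at hx
    obtain ⟨y, _, rfl⟩ := hx
    exact y.2
  have hTmono : ∀ k1 k2 : ℕ, k1 ≤ k2 → T k1 ⊆ T k2 := by
    intro k1 k2 h x hx
    simp only [T, mem_image, mem_filter] at hx ⊢
    obtain ⟨y, ⟨hy1, hy2⟩, rfl⟩ := hx
    exact ⟨y, ⟨hy1, lt_of_lt_of_le hy2 h⟩, rfl⟩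
  have hcard : Fintype.card (ZMod N) < Fintype.card (Fin (N + 1)) := by
    simp [ZMod.card]
  obtain ⟨k1, k2, hne, heq⟩ :=
    Fintype.exists_ne_map_eq_of_card_lt
      (fun k : Fin (N + 1) => ∑ i ∈ T k, (b i : ZMod N)) hcard
  wlog hlt : (k1 : ℕ) < (k2 : ℕ) generalizing k1 k2
  · exact this k2 k1 hne.symm heq.symm (by have := Fin.val_ne_of_ne hne; omega)
  · refine ⟨T k2 \ T k1, (sdiff_subset).trans (hTsub _), ?_, ?_⟩
    · -- nonempty: the element with index k1
      have hk1n : (k1 : ℕ) < n := by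
        have : (k2 : ℕ) ≤ N := Nat.lt_succ_iff.mp k2.2
        omega
      set x0 : {x // x ∈ F} := F.equivFin.symm ⟨k1, hk1n⟩ with hx0
      refine ⟨x0.1, ?_⟩
      have hval : ((F.equivFin x0 : Fin n) : ℕ) = k1 := by simp [hx0]
      rw [mem_sdiff]
      constructor
      · simp only [T, mem_image, mem_filter]
        exact ⟨x0, ⟨mem_attach _ _, by rw [hval]; exact hlt⟩, rfl⟩
      · simp only [T, mem_image, mem_filter]
        rintro ⟨y, ⟨-, hy2⟩, hyv⟩
        have : y = x0 := Subtype.ext hyv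
        rw [this, hval] at hy2
        exact lt_irrefl _ hy2
    · have hsub := hTmono k1 k2 hlt.le
      have hsum : ∑ i ∈ T k2 \ T k1, b i + ∑ i ∈ T k1, b i = ∑ i ∈ T k2, b i :=
        Finset.sum_sdiff hsub
      rw [← ZMod.intCast_zmod_eq_zero_iff_dvd]
      push_cast
      have h2 := congrArg (Int.cast : ℤ → ZMod N) hsum
      push_cast at h2
      rw [eq_sub_of_add_eq h2, heq, sub_self]

lemma iter {ι : Type*} [DecidableEq ι] (N : ℕ) (hN : 0 < N) (b : ι → ℤ)
    (F : Finset ι) :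
    ∃ S ⊆ F, (N : ℤ) ∣ ∑ i ∈ S, b i ∧ F.card ≤ S.card + (N - 1) := by
  induction F using Finset.strongInduction with
  | _ F ih =>
    by_cases h : F.card < N
    · exact ⟨∅, empty_subset _, by simp, by omega⟩
    · obtain ⟨S1, hS1F, hS1ne, hS1d⟩ := dav N hN b F (le_of_not_gt h)
      have hss : F \ S1 ⊂ F := by
        obtain ⟨x, hx⟩ := hS1ne
        refine Finset.ssubset_iff_of_subset (sdiff_subset) |>.mpr ⟨x, hS1F hx, by simp [hx]⟩
      obtain ⟨S2, hS2, hS2d, hS2c⟩ := ih _ hss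
      have hdisj : Disjoint S1 S2 := disjoint_sdiff.mono_right hS2
      refine ⟨S1 ∪ S2, union_subset hS1F (hS2.trans sdiff_subset), ?_, ?_⟩
      · rw [Finset.sum_union hdisj]
        exact dvd_add hS1d hS2d
      · have h1 : (S1 ∪ S2).card = S1.card + S2.card := card_union_of_disjoint hdisj
        have h2 : (F \ S1).card = F.card - S1.card := card_sdiff_of_subset hS1F
        have h3 : S1.card ≤ F.card := card_le_card hS1F
        omega

lemma pairup {ι : Type*} [DecidableEq ι] (c : ι → ℤ) (K : ℕ)
    (hK : ∀ G : Finset ι, (∀ i ∈ G, ∀ j ∈ G, c i = c j → i = j) → G.card ≤ K)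
    (F : Finset ι) :
    ∃ P : Finset (ι × ι),
      (∀ p ∈ P, p.1 ∈ F ∧ p.2 ∈ F ∧ p.1 ≠ p.2 ∧ c p.1 = c p.2) ∧
      (∀ p ∈ P, ∀ q ∈ P, p ≠ q →
        Disjoint ({p.1, p.2} : Finset ι) ({q.1, q.2} : Finset ι)) ∧
      F.card ≤ 2 * P.card + K := by
  induction F using Finset.strongInduction with
  | _ F ih =>
    by_cases h : ∃ i ∈ F, ∃ j ∈ F, i ≠ j ∧ c i = c j
    · obtain ⟨i, hi, j, hj, hij, hc⟩ := h
      have hss : F \ {i, j} ⊂ F :=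
        Finset.ssubset_iff_of_subset (sdiff_subset) |>.mpr ⟨i, hi, by simp⟩
      obtain ⟨P', hP1, hP2, hP3⟩ := ih _ hss
      have hmem : ∀ p ∈ P', p.1 ∉ ({i, j} : Finset ι) ∧ p.2 ∉ ({i, j} : Finset ι) := by
        intro p hp
        obtain ⟨h1, h2, -, -⟩ := hP1 p hp
        rw [mem_sdiff] at h1 h2
        exact ⟨h1.2, h2.2⟩
      have hnotmem : (i, j) ∉ P' := by
        intro hmem'
        exact (hmem _ hmem').1 (by simp)
      refine ⟨insert (i, j) P', ?_, ?_, ?_⟩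
      · intro p hp
        rcases mem_insert.mp hp with rfl | hp'
        · exact ⟨hi, hj, hij, hc⟩
        · obtain ⟨h1, h2, h3, h4⟩ := hP1 p hp'
          exact ⟨(mem_sdiff.mp h1).1, (mem_sdiff.mp h2).1, h3, h4⟩
      · intro p hp q hq hpq
        rcases mem_insert.mp hp with rfl | hp' <;> rcases mem_insert.mp hq with rfl | hq'
        · exact absurd rfl hpq
        · obtain ⟨m1, m2⟩ := hmem q hq'
          rw [Finset.disjoint_left]
          intro x hx hx'
          rcases mem_insert.mp hx' with rfl | hx''
          · exact m1 hx
          · rw [mem_singleton] at hx''; exact m2 (hx'' ▸ hx)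
        · obtain ⟨m1, m2⟩ := hmem p hp'
          rw [Finset.disjoint_right]
          intro x hx hx'
          rcases mem_insert.mp hx' with rfl | hx''
          · exact m1 hx
          · rw [mem_singleton] at hx''; exact m2 (hx'' ▸ hx)
        · exact hP2 p hp' q hq' hpq
      · have hc1 : (insert (i, j) P').card = P'.card + 1 := card_insert_of_notMem hnotmem
        have hc2 : (F \ {i, j}).card = F.card - 2 := by
          rw [card_sdiff_of_subset (by intro x hx; rcases mem_insert.mp hx with rfl | hx' <;>
            simp_all)]
          simp [card_pair hij]
        have : ({i, j} : Finset ι).card ≤ F.card := by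
          apply card_le_card
          intro x hx; rcases mem_insert.mp hx with rfl | hx' <;> simp_all
        rw [card_pair hij] at this
        omega
    · push_neg at h
      refine ⟨∅, by simp, by simp, ?_⟩
      have := hK F (fun i hi j hj hc => by
        by_contra hne
        exact h i hi j hj hne hc)
      omega


lemma classes (m : ℤ) (hm : 0 < m) (x y : ℤ)
    (h : min (x % m) (m - x % m) = min (y % m) (m - y % m)) :
    m ∣ x - y ∨ m ∣ x + y := by
  have hx0 := Int.emod_nonneg x hm.ne'
  have hx1 := Int.emod_lt_of_pos x hm
  have hy0 := Int.emod_nonneg y hm.ne'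
  have hy1 := Int.emod_lt_of_pos y hm
  have e1 := Int.mul_ediv_add_emod x m
  have e2 := Int.mul_ediv_add_emod y m
  have hcase : x % m = y % m ∨ x % m + y % m = m := by
    rcases min_cases (x % m) (m - x % m) with ⟨h1, h1'⟩ | ⟨h1, h1'⟩ <;>
      rcases min_cases (y % m) (m - y % m) with ⟨h2, h2'⟩ | ⟨h2, h2'⟩ <;> omega
  rcases hcase with hc | hc
  · exact Or.inl ⟨x / m - y / m, by linarith [mul_sub m (x / m) (y / m)]⟩
  · refine Or.inr ⟨x / m + y / m + 1, ?_⟩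
    linarith [mul_add m (x / m) (y / m), mul_add m (x / m + y / m) 1]

lemma cbound (N : ℕ) (a : ℤ) (hm : (0:ℤ) < 2 * N) :
    min (a % (2 * N)) (2 * N - a % (2 * N)) ∈ Finset.Icc (0:ℤ) N := by
  have h0 := Int.emod_nonneg a hm.ne'
  have h1 := Int.emod_lt_of_pos a hm
  rcases min_cases (a % (2*N)) (2*N - a % (2*N)) with ⟨h2, h2'⟩ | ⟨h2, h2'⟩ <;>
    · rw [h2, Finset.mem_Icc]; constructor <;> omega
theorem stmt_8 (N M : ℕ) (hN : 2 ≤ N) (hM : 4 * N ≤ M) (a : Fin M → ℤ) :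
    ∃ (P : Finset (Fin M × Fin M)) (T : Finset (Fin M)),
      T = P.biUnion (fun p => ({p.1, p.2} : Finset (Fin M))) ∧
      (∀ p ∈ P, p.1 ≠ p.2 ∧
        (a p.1 ≡ a p.2 [ZMOD (2 * N : ℤ)] ∨ a p.1 ≡ -a p.2 [ZMOD (2 * N : ℤ)])) ∧
      (∀ p ∈ P, ∀ q ∈ P, p ≠ q →
        Disjoint ({p.1, p.2} : Finset (Fin M)) ({q.1, q.2} : Finset (Fin M))) ∧
      N < T.card ∧ T.card = 2 * P.card ∧
      (2 * N : ℤ) ∣ ∑ i ∈ T, a i := by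
  set m : ℤ := 2 * (N : ℤ) with hmdef
  have hm : (0:ℤ) < m := by positivity
  set c : Fin M → ℤ := fun i => min (a i % m) (m - a i % m) with hcdef
  have hK : ∀ G : Finset (Fin M), (∀ i ∈ G, ∀ j ∈ G, c i = c j → i = j) →
      G.card ≤ N + 1 := by
    intro G hinj
    have h1 : G.card ≤ (Finset.Icc (0:ℤ) N).card := by
      apply Finset.card_le_card_of_injOn c
      · intro i _; exact cbound N (a i) hm
      · intro i hi j hj hc
        exact hinj i hi j hj hc
    have h2 : (Finset.Icc (0:ℤ) N).card = N + 1 := by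
      rw [Int.card_Icc]; omega
    omega
  obtain ⟨P0, hP1, hP2, hP3⟩ := pairup c (N + 1) hK Finset.univ
  rw [Finset.card_univ, Fintype.card_fin] at hP3
  -- each pair has even sum
  set b : Fin M × Fin M → ℤ := fun p => (a p.1 + a p.2) / 2 with hbdef
  have hcl : ∀ p ∈ P0, m ∣ a p.1 - a p.2 ∨ m ∣ a p.1 + a p.2 := by
    intro p hp
    exact classes m hm _ _ (hP1 p hp).2.2.2
  have hb : ∀ p ∈ P0, a p.1 + a p.2 = 2 * b p := by
    intro p hp
    have h2m : (2:ℤ) ∣ m := ⟨(N:ℤ), hmdef⟩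
    have h2 : (2:ℤ) ∣ a p.1 + a p.2 := by
      rcases hcl p hp with h | h
      · obtain ⟨k, hk⟩ := h2m.trans h
        omega
      · exact h2m.trans h
    exact (Int.mul_ediv_cancel' h2).symm
  obtain ⟨S, hSsub, hSd, hScard⟩ := iter N (by omega) b P0
  refine ⟨S, S.biUnion (fun p => ({p.1, p.2} : Finset (Fin M))), rfl, ?_, ?_, ?_, ?_, ?_⟩
  · intro p hp
    have hne := (hP1 p (hSsub hp)).2.2.1
    refine ⟨hne, ?_⟩
    rcases hcl p (hSsub hp) with h | h
    · exact Or.inl ((Int.modEq_iff_dvd.mpr h).symm)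
    · refine Or.inr (Int.modEq_iff_dvd.mpr ?_)
      rw [show -a p.2 - a p.1 = -(a p.1 + a p.2) by ring]
      exact dvd_neg.mpr h
  · exact fun p hp q hq hpq => hP2 p (hSsub hp) q (hSsub hq) hpq
  · have hTc : (S.biUnion (fun p => ({p.1, p.2} : Finset (Fin M)))).card = 2 * S.card := by
      rw [Finset.card_biUnion (fun p hp q hq hpq => hP2 p (hSsub hp) q (hSsub hq) hpq)]
      rw [Finset.sum_congr rfl (fun p hp => card_pair (hP1 p (hSsub hp)).2.2.1)]
      rw [Finset.sum_const, smul_eq_mul, mul_comm]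
    have hcards : S.card ≤ P0.card := card_le_card hSsub
    omega
  · rw [Finset.card_biUnion (fun p hp q hq hpq => hP2 p (hSsub hp) q (hSsub hq) hpq)]
    rw [Finset.sum_congr rfl (fun p hp => card_pair (hP1 p (hSsub hp)).2.2.1)]
    rw [Finset.sum_const, smul_eq_mul, mul_comm]
  · have hsum : ∑ i ∈ S.biUnion (fun p => ({p.1, p.2} : Finset (Fin M))), a i
        = ∑ p ∈ S, (a p.1 + a p.2) := by
      rw [Finset.sum_biUnion (fun p hp q hq hpq =>
        hP2 p (hSsub (Finset.mem_coe.mp hp)) q (hSsub (Finset.mem_coe.mp hq)) hpq)]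
      exact Finset.sum_congr rfl (fun p hp =>
        Finset.sum_pair (hP1 p (hSsub hp)).2.2.1)
    rw [hsum, Finset.sum_congr rfl (fun p hp => hb p (hSsub hp)), ← Finset.mul_sum]
    exact mul_dvd_mul_left 2 hSd
end

section
/- Let N ≥ 1 and let a_1, ..., a_L be integers with ∑_{j=1}^L a_j ≡ 0 (mod 2N). Then the number of subsets S ⊆ {1, ..., L} with ∑_{i ∈ S} a_i ≡ 0 (mod N) equals (2^L / N) ∑_{b=0}^{N−1} ∏_{j=1}^{L} cos(π b a_j / N). -/
open Finset

lemma orth16 (N : ℕ) (hN : 1 ≤ N) (m : ℤ) :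
    ∑ b ∈ Finset.range N, Complex.exp (2 * Real.pi * Complex.I * (b * m) / N)
      = if (N:ℤ) ∣ m then (N:ℂ) else 0 := by
  have hNC : (N:ℂ) ≠ 0 := Nat.cast_ne_zero.mpr (by omega)
  set z : ℂ := Complex.exp (2 * Real.pi * Complex.I * m / N) with hz
  have hpow : ∀ b : ℕ, Complex.exp (2 * Real.pi * Complex.I * (b * m) / N) = z ^ b := by
    intro b
    rw [hz, ← Complex.exp_nat_mul]
    ring_nf
  rw [Finset.sum_congr rfl fun b _ => hpow b]
  by_cases h : (N:ℤ) ∣ m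
  · have hz1 : z = 1 := by
      obtain ⟨k, hk⟩ := h
      rw [hz, hk]
      push_cast
      rw [show 2 * (Real.pi:ℂ) * Complex.I * ((N:ℂ) * k) / N = k * (2*Real.pi*Complex.I) by
        field_simp]
      exact Complex.exp_int_mul_two_pi_mul_I k
    rw [if_pos h]
    simp [hz1]
  · have hzN : z ^ N = 1 := by
      rw [hz, ← Complex.exp_nat_mul,
        show (N:ℂ) * (2 * Real.pi * Complex.I * m / N) = m * (2*Real.pi*Complex.I) by
          field_simp]
      exact Complex.exp_int_mul_two_pi_mul_I m
    have hz1 : z ≠ 1 := by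
      intro hz1
      rw [hz, Complex.exp_eq_one_iff] at hz1
      obtain ⟨n, hn⟩ := hz1
      apply h
      have hpi : (Real.pi : ℂ) ≠ 0 := Complex.ofReal_ne_zero.mpr Real.pi_ne_zero
      have hI : (2:ℂ) * Real.pi * Complex.I ≠ 0 := by
        simp [Complex.I_ne_zero, hpi]
      have hm : (m : ℂ) = (N:ℂ) * n := by
        apply mul_left_cancel₀ hI
        field_simp at hn
        linear_combination (2 * (Real.pi:ℂ) * Complex.I) * hn
      exact ⟨n, by exact_mod_cast hm⟩
    rw [geom_sum_eq hz1, hzN, if_neg h]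
    simp

lemma exp2_add_one (θ : ℝ) :
    Complex.exp (2 * (θ:ℂ) * Complex.I) + 1
      = 2 * (Real.cos θ : ℂ) * Complex.exp ((θ:ℂ) * Complex.I) := by
  have h1 : Complex.exp (2*(θ:ℂ)*Complex.I)
      = Complex.exp ((θ:ℂ)*Complex.I) * Complex.exp ((θ:ℂ)*Complex.I) := by
    rw [← Complex.exp_add]; ring_nf
  have h0 : Complex.exp (-(θ:ℂ) * Complex.I) * Complex.exp ((θ:ℂ)*Complex.I) = 1 := by
    rw [← Complex.exp_add, show -(θ:ℂ)*Complex.I + (θ:ℂ)*Complex.I = 0 by ring,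
      Complex.exp_zero]
  rw [h1, Complex.ofReal_cos, Complex.cos]
  linear_combination -h0


theorem stmt_16 (N L : ℕ) (hN : 1 ≤ N) (a : Fin L → ℤ)
    (hsum : (2 * N : ℤ) ∣ ∑ j : Fin L, a j) :
    ((Finset.univ.powerset.filter
        (fun S : Finset (Fin L) => (N : ℤ) ∣ ∑ i ∈ S, a i)).card : ℝ) =
      (2 : ℝ) ^ L / N * ∑ b ∈ Finset.range N,
        ∏ j : Fin L, Real.cos (Real.pi * b * a j / N) := by
  have hNC : (N:ℂ) ≠ 0 := Nat.cast_ne_zero.mpr (by omega)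
  have hNR : (N:ℝ) ≠ 0 := Nat.cast_ne_zero.mpr (by omega)
  obtain ⟨k, hk⟩ := hsum
  have key : ((Finset.univ.powerset.filter
        (fun S : Finset (Fin L) => (N : ℤ) ∣ ∑ i ∈ S, a i)).card : ℂ) * N =
      (2:ℂ)^L * ∑ b ∈ Finset.range N, ∏ j : Fin L,
        ((Real.cos (Real.pi * b * a j / N) : ℝ) : ℂ) := by
    calc ((Finset.univ.powerset.filter
        (fun S : Finset (Fin L) => (N : ℤ) ∣ ∑ i ∈ S, a i)).card : ℂ) * N
        = ∑ S ∈ (Finset.univ : Finset (Fin L)).powerset,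
            (if (N:ℤ) ∣ ∑ i ∈ S, a i then (N:ℂ) else 0) := by
          rw [Finset.sum_ite, Finset.sum_const, Finset.sum_const]
          simp [mul_comm]
      _ = ∑ S ∈ (Finset.univ : Finset (Fin L)).powerset, ∑ b ∈ Finset.range N,
            Complex.exp (2 * Real.pi * Complex.I * (b * ∑ i ∈ S, a i) / N) := by
          exact Finset.sum_congr rfl fun S _ => (orth16 N hN _).symm
      _ = ∑ b ∈ Finset.range N, ∑ S ∈ (Finset.univ : Finset (Fin L)).powerset,
            ∏ i ∈ S, Complex.exp (2 * Real.pi * Complex.I * (b * a i) / N) := by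
          rw [Finset.sum_comm]
          refine Finset.sum_congr rfl fun b _ => Finset.sum_congr rfl fun S _ => ?_
          rw [← Complex.exp_sum]
          congr 1
          push_cast
          rw [← Finset.sum_div, ← Finset.mul_sum, ← Finset.mul_sum]
      _ = ∑ b ∈ Finset.range N, ∏ j : Fin L,
            (Complex.exp (2 * Real.pi * Complex.I * (b * a j) / N) + 1) := by
          refine Finset.sum_congr rfl fun b _ => ?_
          rw [Finset.prod_add]
          simp
      _ = (2:ℂ)^L * ∑ b ∈ Finset.range N, ∏ j : Fin L,
            ((Real.cos (Real.pi * b * a j / N) : ℝ) : ℂ) := by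
          rw [Finset.mul_sum]
          refine Finset.sum_congr rfl fun b hb => ?_
          have hterm : ∀ j : Fin L,
              Complex.exp (2 * Real.pi * Complex.I * (b * a j) / N) + 1
                = 2 * ((Real.cos (Real.pi * b * a j / N) : ℝ) : ℂ)
                    * Complex.exp (((Real.pi * b * a j / N : ℝ) : ℂ) * Complex.I) := by
            intro j
            have h := exp2_add_one (Real.pi * b * a j / N)
            rw [show (2:ℂ) * ((Real.pi * b * a j / N : ℝ):ℂ) * Complex.I
                = 2 * Real.pi * Complex.I * (b * a j) / N by push_cast; ring] at h
            exact h
          rw [Finset.prod_congr rfl fun j _ => hterm j,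
            Finset.prod_mul_distrib, Finset.prod_mul_distrib, ← Complex.exp_sum]
          have hsR : (∑ j : Fin L, ((Real.pi * b * a j / N : ℝ):ℂ) * Complex.I)
              = ((b * k : ℤ):ℂ) * (2 * Real.pi * Complex.I) := by
            rw [← Finset.sum_mul, ← Complex.ofReal_sum]
            have h1 : ∑ j : Fin L, (Real.pi * b * a j / N : ℝ) = b * k * (2*Real.pi) := by
              have h2 : ((∑ j : Fin L, a j : ℤ) : ℝ) = 2 * N * k := by
                exact_mod_cast congrArg (Int.cast : ℤ → ℝ) hk
              push_cast at h2
              calc ∑ j : Fin L, (Real.pi * b * a j / N : ℝ)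
                  = (Real.pi * b / N) * ∑ j : Fin L, (a j : ℝ) := by
                    rw [Finset.mul_sum]
                    exact Finset.sum_congr rfl fun j _ => by ring
                _ = b * k * (2*Real.pi) := by
                    rw [h2]; field_simp
            rw [h1]; push_cast; ring
          rw [hsR, Complex.exp_int_mul_two_pi_mul_I]
          simp [Finset.prod_const]
  have keyR : ((Finset.univ.powerset.filter
        (fun S : Finset (Fin L) => (N : ℤ) ∣ ∑ i ∈ S, a i)).card : ℝ) * N =
      (2:ℝ)^L * ∑ b ∈ Finset.range N, ∏ j : Fin L,
        Real.cos (Real.pi * b * a j / N) := by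
    exact_mod_cast key
  rw [div_mul_eq_mul_div, eq_div_iff hNR]
  exact keyR
end
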